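/- arXiv:2403.01151 — 2 statements merged into one kernel-verified Lean document; each statement's English description precedes it below -/
import Mathlib

section
/- Let (G, ℓ) be a finite connected graph with positive edge resistances. For every edge e, the Ricci–Foster curvature satisfies |K_e| ≤ 1. -/
open Finset

section RicciFoster

variable {V E : Type} [Fintype V] [Fintype E] [DecidableEq V] [DecidableEq E]

/-- One adjacency step: `a` and `b` are joined by an edge in `T`,
or identified by the relation `R`. -/
def stepRel (ends : E → V × V) (T : Finset E) (R : V → V → Prop) (a b : V) : Prop :=
  (∃ e ∈ T, ends e = (a, b) ∨ ends e = (b, a)) ∨ R a b ∨ R b a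

/-- The edge set `T`, together with the identifications `R`, connects all vertices. -/
def Connects (ends : E → V × V) (T : Finset E) (R : V → V → Prop) : Prop :=
  ∀ a b : V, Relation.ReflTransGen (stepRel ends T R) a b

/-- The (multi)graph with vertex set `V`, edge set `E` and endpoint map `ends` is connected. -/
def ConnectedG (ends : E → V × V) : Prop :=
  Connects ends Finset.univ (fun _ _ => False)

open scoped Classical in
/-- Weighted spanning-tree polynomial `τ(G; ℓ) = Σ_{spanning trees T} Π_{e ∉ T} ℓ_e`.
A spanning tree is an edge set with `|V| - 1` edges connecting all vertices. -/
noncomputable def treePoly (ends : E → V × V) (ℓ : E → ℝ) : ℝ :=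
  ∑ T ∈ Finset.univ.filter
      (fun T : Finset E => T.card + 1 = Fintype.card V ∧
        Connects ends T (fun _ _ => False)),
    ∏ e ∈ Tᶜ, ℓ e

open scoped Classical in
/-- Weighted spanning-tree polynomial `τ(G/xy; ℓ)` of the contraction `G/xy`:
spanning trees of `G/xy` are edge sets of `G` with `|V| - 2` edges which connect
all vertices once `x` and `y` are identified. -/
noncomputable def treePolyContract (ends : E → V × V) (x y : V) (ℓ : E → ℝ) : ℝ :=
  ∑ T ∈ Finset.univ.filter
      (fun T : Finset E => T.card + 2 = Fintype.card V ∧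
        Connects ends T (fun a b => a = x ∧ b = y)),
    ∏ e ∈ Tᶜ, ℓ e

/-- Effective resistance `ω_xy = τ(G/xy; ℓ) / τ(G; ℓ)`. -/
noncomputable def effRes (ends : E → V × V) (x y : V) (ℓ : E → ℝ) : ℝ :=
  treePolyContract ends x y ℓ / treePoly ends ℓ

/-- Degree of a vertex (a loop counts twice). -/
def degreeG (ends : E → V × V) (v : V) : ℕ :=
  ∑ e : E, ((if (ends e).1 = v then 1 else 0) + (if (ends e).2 = v then 1 else 0))

/-- Ricci–Foster curvature `K_e = 1/deg u + 1/deg v − ω_uv/ℓ_e` of the edge `e = uv`. -/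
noncomputable def curv (ends : E → V × V) (ℓ : E → ℝ) (e : E) : ℝ :=
  (degreeG ends (ends e).1 : ℝ)⁻¹ + (degreeG ends (ends e).2 : ℝ)⁻¹
    - effRes ends (ends e).1 (ends e).2 ℓ / ℓ e

/-- `ℓ : ℝ → E → ℝ` is a solution of the Ricci–Foster flow on `[0, T)`:
the resistances stay positive and `dℓ_e/dt = −K_e(ℓ(t))` for every edge `e`. -/
def IsRicciFlow (ends : E → V × V) (T : ℝ) (ℓ : ℝ → E → ℝ) : Prop :=
  ∀ t ∈ Set.Ico (0 : ℝ) T,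
    (∀ e, 0 < ℓ t e) ∧
    (∀ e, HasDerivWithinAt (fun s => ℓ s e) (-(curv ends (ℓ t) e)) (Set.Ico (0 : ℝ) T) t)

end RicciFoster

set_option linter.unusedSectionVars false
set_option maxHeartbeats 1000000

section AuxCurvature

variable {V E : Type} [Fintype V] [Fintype E] [DecidableEq V] [DecidableEq E]

def symRelX (s : Finset (V × V)) (a b : V) : Prop := (a, b) ∈ s ∨ (b, a) ∈ s

lemma symRelX_symm {s : Finset (V × V)} : Symmetric (symRelX s) := fun _ _ h => h.symm

lemma rtg_monoX {α : Type*} {r r' : α → α → Prop}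
    (h : ∀ a b, r a b → Relation.ReflTransGen r' a b) {a b : α}
    (hab : Relation.ReflTransGen r a b) : Relation.ReflTransGen r' a b := by
  induction hab with
  | refl => exact .refl
  | tail _ hbc ih => exact ih.trans (h _ _ hbc)

def ConnSX (s : Finset (V × V)) : Prop :=
  ∀ a b : V, Relation.ReflTransGen (symRelX s) a b

lemma connSX_of {s s' : Finset (V × V)}
    (h : ∀ a b, symRelX s a b → Relation.ReflTransGen (symRelX s') a b)
    (hs : ConnSX s) : ConnSX s' := fun a b => rtg_monoX h (hs a b)

theorem exists_spanningX [Nonempty V] (s : Finset (V × V)) (hs : ConnSX s) :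
    ∃ s' ⊆ s, ConnSX s' ∧ s'.card + 1 = Fintype.card V := by
  classical
  induction s using Finset.strongInductionOn with
  | _ s ih =>
  by_cases hmin : ∃ p ∈ s, ConnSX (s.erase p)
  · obtain ⟨p, hp, hconn⟩ := hmin
    obtain ⟨s', hsub, h1, h2⟩ := ih (s.erase p) (Finset.erase_ssubset hp) hconn
    exact ⟨s', hsub.trans (Finset.erase_subset _ _), h1, h2⟩
  push_neg at hmin
  set H : SimpleGraph V := SimpleGraph.fromRel (fun a b => (a, b) ∈ s) with hH
  have hadj : ∀ a b, H.Adj a b ↔ a ≠ b ∧ symRelX s a b := by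
    intro a b
    rw [hH, SimpleGraph.fromRel_adj]
    rfl
  -- no loops
  have hnl : ∀ x : V, (x, x) ∉ s := by
    intro x hx
    refine hmin (x, x) hx (connSX_of ?_ hs)
    rintro a b (h | h)
    · rcases eq_or_ne (a, b) ((x, x) : V × V) with he | he
      · simp only [Prod.mk.injEq] at he
        obtain ⟨rfl, rfl⟩ := he
        exact .refl
      · exact Relation.ReflTransGen.single (Or.inl (Finset.mem_erase.2 ⟨he, h⟩))
    · rcases eq_or_ne (b, a) ((x, x) : V × V) with he | he
      · simp only [Prod.mk.injEq] at he
        obtain ⟨rfl, rfl⟩ := he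
        exact .refl
      · exact Relation.ReflTransGen.single (Or.inr (Finset.mem_erase.2 ⟨he, h⟩))
  -- injectivity of the pair map on s
  have hinj : Set.InjOn (fun p : V × V => s(p.1, p.2)) s := by
    rintro ⟨a, b⟩ hp q hq hpq
    by_contra hne
    have hq' : q = ((b, a) : V × V) := by
      dsimp only at hpq
      rcases Sym2.eq_iff.mp hpq with ⟨h1, h2⟩ | ⟨h1, h2⟩
      · exact absurd (Prod.ext h1.symm h2.symm) (fun h => hne h.symm)
      · exact Prod.ext h2.symm h1.symm
    subst hq'
    refine hmin (b, a) hq (connSX_of ?_ hs)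
    rintro x y (h | h)
    · rcases eq_or_ne ((x, y) : V × V) ((b, a) : V × V) with he | he
      · simp only [Prod.mk.injEq] at he
        obtain ⟨rfl, rfl⟩ := he
        exact Relation.ReflTransGen.single (Or.inr (Finset.mem_erase.2 ⟨hne, hp⟩))
      · exact Relation.ReflTransGen.single (Or.inl (Finset.mem_erase.2 ⟨he, h⟩))
    · rcases eq_or_ne ((y, x) : V × V) ((b, a) : V × V) with he | he
      · simp only [Prod.mk.injEq] at he
        obtain ⟨rfl, rfl⟩ := he
        exact Relation.ReflTransGen.single (Or.inl (Finset.mem_erase.2 ⟨hne, hp⟩))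
      · exact Relation.ReflTransGen.single (Or.inr (Finset.mem_erase.2 ⟨he, h⟩))
  -- connectedness of H
  have hpre : H.Preconnected := by
    intro a b
    rw [SimpleGraph.reachable_iff_reflTransGen]
    refine rtg_monoX ?_ (hs a b)
    intro x y hxy
    rcases eq_or_ne x y with rfl | hne
    · exact .refl
    · exact Relation.ReflTransGen.single ((hadj x y).2 ⟨hne, hxy⟩)
  have hconn : H.Connected := (SimpleGraph.connected_iff H).mpr ⟨hpre, ‹Nonempty V›⟩
  -- acyclicity of H
  have hac : H.IsAcyclic := by
    rw [SimpleGraph.isAcyclic_iff_forall_adj_isBridge]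
    intro v w hvw
    by_contra hbr
    rw [SimpleGraph.isBridge_iff] at hbr
    push_neg at hbr
    have hreach := hbr
    rw [SimpleGraph.reachable_iff_reflTransGen] at hreach
    obtain ⟨hne, hsym⟩ := (hadj v w).1 hvw
    -- pick the witness pair q
    obtain ⟨q, hq, hqvw⟩ : ∃ q ∈ s, q = ((v, w) : V × V) ∨ q = (w, v) := by
      rcases hsym with h | h
      · exact ⟨(v, w), h, Or.inl rfl⟩
      · exact ⟨(w, v), h, Or.inr rfl⟩
    have hqpair : s(q.1, q.2) = s(v, w) := by
      rcases hqvw with rfl | rfl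
      · rfl
      · exact Sym2.eq_swap
    -- reachability through the deleted graph gives a path avoiding q
    have hstep' : ∀ x y, (H \ SimpleGraph.fromEdgeSet {s(v, w)}).Adj x y →
        symRelX (s.erase q) x y := by
      intro x y hxy
      have h1 : H.Adj x y := hxy.1
      have h2 : s(x, y) ≠ s(v, w) := by
        intro h
        exact hxy.2 ⟨by simp [h], h1.ne⟩
      obtain ⟨_, hxy'⟩ := (hadj x y).1 h1
      rcases hxy' with h | h
      · refine Or.inl (Finset.mem_erase.2 ⟨?_, h⟩)
        rintro rfl
        exact h2 hqpair
      · refine Or.inr (Finset.mem_erase.2 ⟨?_, h⟩)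
        rintro rfl
        exact h2 (hqpair.symm ▸ Sym2.eq_swap)
    have hvwr : Relation.ReflTransGen (symRelX (s.erase q)) v w :=
      rtg_monoX (fun x y h => Relation.ReflTransGen.single (hstep' x y h)) hreach
    refine hmin q hq (connSX_of ?_ hs)
    rintro x y (h | h)
    · rcases eq_or_ne ((x, y) : V × V) q with he | he
      · rcases hqvw with rfl | rfl
        · simp only [Prod.mk.injEq] at he
          obtain ⟨rfl, rfl⟩ := he
          exact hvwr
        · simp only [Prod.mk.injEq] at he
          obtain ⟨rfl, rfl⟩ := he
          exact (@Relation.ReflTransGen.stdSymm _ _ ⟨fun _ _ h' => symRelX_symm h'⟩).symm _ _ hvwr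
      · exact Relation.ReflTransGen.single (Or.inl (Finset.mem_erase.2 ⟨he, h⟩))
    · rcases eq_or_ne ((y, x) : V × V) q with he | he
      · rcases hqvw with rfl | rfl
        · simp only [Prod.mk.injEq] at he
          obtain ⟨rfl, rfl⟩ := he
          exact (@Relation.ReflTransGen.stdSymm _ _ ⟨fun _ _ h' => symRelX_symm h'⟩).symm _ _ hvwr
        · simp only [Prod.mk.injEq] at he
          obtain ⟨rfl, rfl⟩ := he
          exact hvwr
      · exact Relation.ReflTransGen.single (Or.inr (Finset.mem_erase.2 ⟨he, h⟩))
  -- H is a tree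
  letI : DecidableRel H.Adj := Classical.decRel _
  have htree : H.IsTree := ⟨hconn, hac⟩
  have hcardV := htree.card_edgeFinset
  have hedge : H.edgeFinset = s.image (fun p => s(p.1, p.2)) := by
    ext e
    induction e with
    | _ a b =>
      simp only [SimpleGraph.mem_edgeFinset, SimpleGraph.mem_edgeSet, Finset.mem_image, hadj]
      constructor
      · rintro ⟨hne, h | h⟩
        · exact ⟨(a, b), h, rfl⟩
        · exact ⟨(b, a), h, Sym2.eq_swap⟩
      · rintro ⟨⟨x, y⟩, hxy, he⟩
        have hxyne : x ≠ y := by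
          rintro rfl
          exact hnl x hxy
        simp only [Sym2.eq, Sym2.rel_iff', Prod.mk.injEq, Prod.swap_prod_mk] at he
        rcases he with ⟨rfl, rfl⟩ | ⟨rfl, rfl⟩
        · exact ⟨hxyne, Or.inl hxy⟩
        · exact ⟨hxyne.symm, Or.inr hxy⟩
  have hcards : H.edgeFinset.card = s.card := by
    rw [hedge]
    exact Finset.card_image_of_injOn hinj
  exact ⟨s, Finset.Subset.refl s, hs, by rw [← hcards]; exact hcardV⟩


theorem card_le_of_connSX [Nonempty V] (s : Finset (V × V)) (hs : ConnSX s) :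
    Fintype.card V ≤ s.card + 1 := by
  obtain ⟨s', hsub, _, h⟩ := exists_spanningX s hs
  have := Finset.card_le_card hsub
  omega

/-- Transfer from `Connects` to `ConnSX` of the image. -/
lemma connSX_image {ends : E → V × V} {T : Finset E} {R : V → V → Prop}
    (hR : ∀ a b, R a b → Relation.ReflTransGen (symRelX (T.image ends)) a b)
    (h : Connects ends T R) : ConnSX (T.image ends) := by
  intro a b
  refine rtg_monoX ?_ (h a b)
  rintro x y (⟨f, hf, hff | hff⟩ | hr | hr)
  · exact Relation.ReflTransGen.single (Or.inl (hff ▸ Finset.mem_image_of_mem ends hf))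
  · exact Relation.ReflTransGen.single (Or.inr (hff ▸ Finset.mem_image_of_mem ends hf))
  · exact hR x y hr
  · exact (@Relation.ReflTransGen.stdSymm _ _ ⟨fun _ _ h' => symRelX_symm h'⟩).symm _ _ (hR y x hr)

lemma card_le_conn_false [Nonempty V] {ends : E → V × V} {T : Finset E}
    (h : Connects ends T (fun _ _ => False)) : Fintype.card V ≤ T.card + 1 := by
  have h1 := card_le_of_connSX _ (connSX_image (fun a b hr => hr.elim) h)
  have h2 := Finset.card_image_le (s := T) (f := ends)
  omega

lemma card_le_conn_diag [Nonempty V] {ends : E → V × V} {T : Finset E} {x : V}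
    (h : Connects ends T (fun a b => a = x ∧ b = x)) : Fintype.card V ≤ T.card + 1 := by
  have h1 := card_le_of_connSX _
    (connSX_image (fun a b hr => by obtain ⟨rfl, rfl⟩ := hr; exact .refl) h)
  have h2 := Finset.card_image_le (s := T) (f := ends)
  omega

lemma card_le_conn_pair [Nonempty V] {ends : E → V × V} {T : Finset E} {x y : V}
    (h : Connects ends T (fun a b => a = x ∧ b = y)) : Fintype.card V ≤ T.card + 2 := by
  have hs : ConnSX (insert ((x, y) : V × V) (T.image ends)) := by
    intro a b
    refine rtg_monoX ?_ (h a b)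
    rintro p q (⟨f, hf, hff | hff⟩ | ⟨rfl, rfl⟩ | ⟨rfl, rfl⟩)
    · exact Relation.ReflTransGen.single
        (Or.inl (Finset.mem_insert_of_mem (hff ▸ Finset.mem_image_of_mem ends hf)))
    · exact Relation.ReflTransGen.single
        (Or.inr (Finset.mem_insert_of_mem (hff ▸ Finset.mem_image_of_mem ends hf)))
    · exact Relation.ReflTransGen.single (Or.inl (Finset.mem_insert_self _ _))
    · exact Relation.ReflTransGen.single (Or.inr (Finset.mem_insert_self _ _))
  have h1 := card_le_of_connSX _ hs
  have h2 := Finset.card_image_le (s := T) (f := ends)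
  have h3 := Finset.card_insert_le ((x, y) : V × V) (T.image ends)
  omega

/-- Existence of a spanning tree. -/
lemma exists_tree [Nonempty E] {ends : E → V × V} (hG : ConnectedG ends) :
    ∃ T : Finset E, T.card + 1 = Fintype.card V ∧ Connects ends T (fun _ _ => False) := by
  classical
  have hNV : Nonempty V := ⟨(ends (Classical.arbitrary E)).1⟩
  have hs0 : ConnSX ((Finset.univ : Finset E).image ends) :=
    connSX_image (fun a b hr => hr.elim) hG
  obtain ⟨s', hsub, hconn, hcard⟩ := exists_spanningX _ hs0
  set g : V × V → E := fun p => if h : ∃ f, ends f = p then h.choose else Classical.arbitrary E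
    with hg
  have hgp : ∀ p ∈ s', ends (g p) = p := by
    intro p hp
    obtain ⟨f, _, hf⟩ := Finset.mem_image.1 (hsub hp)
    have hex : ∃ f, ends f = p := ⟨f, hf⟩
    simp only [hg, dif_pos hex]
    exact hex.choose_spec
  refine ⟨s'.image g, ?_, ?_⟩
  · rw [Finset.card_image_of_injOn (fun p hp q hq hpq => by
      rw [← hgp p hp, ← hgp q hq, hpq])]
    exact hcard
  · intro a b
    refine rtg_monoX ?_ (hconn a b)
    rintro x y (hxy | hxy)
    · exact Relation.ReflTransGen.single
        (Or.inl ⟨g (x, y), Finset.mem_image_of_mem g hxy, Or.inl (hgp _ hxy)⟩)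
    · exact Relation.ReflTransGen.single
        (Or.inl ⟨g (y, x), Finset.mem_image_of_mem g hxy, Or.inr (hgp _ hxy)⟩)

lemma treePoly_pos [Nonempty E] {ends : E → V × V} (hG : ConnectedG ends)
    {ℓ : E → ℝ} (hpos : ∀ e, 0 < ℓ e) : 0 < treePoly ends ℓ := by
  classical
  obtain ⟨T, hT1, hT2⟩ := exists_tree hG
  unfold treePoly
  refine lt_of_lt_of_le (b := ∏ f ∈ Tᶜ, ℓ f) (Finset.prod_pos (fun f _ => hpos f)) ?_
  exact Finset.single_le_sum (f := fun T : Finset E => ∏ f ∈ Tᶜ, ℓ f)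
    (fun S _ => Finset.prod_nonneg (fun f _ => (hpos f).le))
    (Finset.mem_filter.2 ⟨Finset.mem_univ _, hT1, hT2⟩)

lemma treePolyContract_nonneg {ends : E → V × V} (x y : V)
    {ℓ : E → ℝ} (hpos : ∀ e, 0 < ℓ e) : 0 ≤ treePolyContract ends x y ℓ := by
  unfold treePolyContract
  exact Finset.sum_nonneg (fun S _ => Finset.prod_nonneg (fun f _ => (hpos f).le))

/-- generic key inequality (insert direction) -/
lemma key_le {ℓ : E → ℝ} (hpos : ∀ f, 0 < ℓ f) (e : E) (A B : Finset (Finset E))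
    (hA : ∀ T ∈ A, e ∉ T) (hins : ∀ T ∈ A, insert e T ∈ B) :
    ∑ T ∈ A, ∏ f ∈ Tᶜ, ℓ f ≤ ℓ e * ∑ T ∈ B, ∏ f ∈ Tᶜ, ℓ f := by
  rw [Finset.mul_sum]
  have h1 : ∀ T ∈ A, ∏ f ∈ Tᶜ, ℓ f = ℓ e * ∏ f ∈ (insert e T)ᶜ, ℓ f := by
    intro T hT
    rw [Finset.compl_insert, Finset.mul_prod_erase _ _ (Finset.mem_compl.2 (hA T hT))]
  calc ∑ T ∈ A, ∏ f ∈ Tᶜ, ℓ f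
      = ∑ T ∈ A, ℓ e * ∏ f ∈ (insert e T)ᶜ, ℓ f := Finset.sum_congr rfl h1
    _ = ∑ T ∈ A.image (insert e), ℓ e * ∏ f ∈ Tᶜ, ℓ f := by
        rw [Finset.sum_image]
        intro T hT T' hT' h
        rw [← Finset.erase_insert (hA T hT), h, Finset.erase_insert (hA T' hT')]
    _ ≤ ∑ T ∈ B, ℓ e * ∏ f ∈ Tᶜ, ℓ f := by
        refine Finset.sum_le_sum_of_subset_of_nonneg ?_ ?_
        · intro T hT
          obtain ⟨S, hS, rfl⟩ := Finset.mem_image.1 hT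
          exact hins S hS
        · intro T _ _
          exact mul_nonneg (hpos e).le (Finset.prod_nonneg (fun f _ => (hpos f).le))

/-- generic key inequality (erase direction) -/
lemma key_ge {ℓ : E → ℝ} (hpos : ∀ f, 0 < ℓ f) (e : E) (A B : Finset (Finset E))
    (hB : ∀ T ∈ B, e ∈ T) (hers : ∀ T ∈ B, T.erase e ∈ A) :
    ℓ e * ∑ T ∈ B, ∏ f ∈ Tᶜ, ℓ f ≤ ∑ T ∈ A, ∏ f ∈ Tᶜ, ℓ f := by
  rw [Finset.mul_sum]
  have h1 : ∀ T ∈ B, ℓ e * ∏ f ∈ Tᶜ, ℓ f = ∏ f ∈ (T.erase e)ᶜ, ℓ f := by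
    intro T hT
    rw [Finset.compl_erase, Finset.prod_insert (by simpa using hB T hT)]
  calc ∑ T ∈ B, ℓ e * ∏ f ∈ Tᶜ, ℓ f
      = ∑ T ∈ B, ∏ f ∈ (T.erase e)ᶜ, ℓ f := Finset.sum_congr rfl h1
    _ = ∑ T ∈ B.image (fun T => T.erase e), ∏ f ∈ Tᶜ, ℓ f := by
        rw [Finset.sum_image]
        intro T hT T' hT' h
        beta_reduce at h
        rw [← Finset.insert_erase (hB T hT), h, Finset.insert_erase (hB T' hT')]
    _ ≤ ∑ T ∈ A, ∏ f ∈ Tᶜ, ℓ f := by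
        refine Finset.sum_le_sum_of_subset_of_nonneg ?_ ?_
        · intro T hT
          obtain ⟨S, hS, rfl⟩ := Finset.mem_image.1 hT
          exact hers S hS
        · intro T _ _
          exact Finset.prod_nonneg (fun f _ => (hpos f).le)


lemma connects_insert {ends : E → V × V} {e : E} {u v : V} (hu : ends e = (u, v))
    {T : Finset E} (h : Connects ends T (fun a b => a = u ∧ b = v)) :
    Connects ends (insert e T) (fun _ _ : V => False) := by
  intro a b
  refine rtg_monoX ?_ (h a b)
  rintro x y (⟨f, hf, hff⟩ | ⟨rfl, rfl⟩ | ⟨rfl, rfl⟩)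
  · exact Relation.ReflTransGen.single (Or.inl ⟨f, Finset.mem_insert_of_mem hf, hff⟩)
  · exact Relation.ReflTransGen.single (Or.inl ⟨e, Finset.mem_insert_self _ _, Or.inl hu⟩)
  · exact Relation.ReflTransGen.single (Or.inl ⟨e, Finset.mem_insert_self _ _, Or.inr hu⟩)

lemma connects_erase {ends : E → V × V} {e : E} {u v : V} (hu : ends e = (u, v))
    {T : Finset E} (he : e ∈ T) (h : Connects ends T (fun _ _ : V => False)) :
    Connects ends (T.erase e) (fun a b => a = u ∧ b = v) := by
  intro a b
  refine rtg_monoX ?_ (h a b)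
  rintro x y (⟨f, hf, hff⟩ | hF | hF)
  · rcases eq_or_ne f e with rfl | hne
    · rw [hu] at hff
      rcases hff with hff | hff
      · simp only [Prod.mk.injEq] at hff
        exact Relation.ReflTransGen.single (Or.inr (Or.inl ⟨hff.1.symm, hff.2.symm⟩))
      · simp only [Prod.mk.injEq] at hff
        exact Relation.ReflTransGen.single (Or.inr (Or.inr ⟨hff.1.symm, hff.2.symm⟩))
    · exact Relation.ReflTransGen.single (Or.inl ⟨f, Finset.mem_erase.2 ⟨hne, hf⟩, hff⟩)
  · exact hF.elim
  · exact hF.elim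

lemma connects_erase' {ends : E → V × V} {e : E} {u v : V} (hu : ends e = (u, v))
    {T : Finset E} (he : e ∈ T) (h : Connects ends T (fun a b => a = u ∧ b = v)) :
    Connects ends (T.erase e) (fun a b => a = u ∧ b = v) := by
  intro a b
  refine rtg_monoX ?_ (h a b)
  rintro x y (⟨f, hf, hff⟩ | hr | hr)
  · rcases eq_or_ne f e with rfl | hne
    · rw [hu] at hff
      rcases hff with hff | hff
      · simp only [Prod.mk.injEq] at hff
        exact Relation.ReflTransGen.single (Or.inr (Or.inl ⟨hff.1.symm, hff.2.symm⟩))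
      · simp only [Prod.mk.injEq] at hff
        exact Relation.ReflTransGen.single (Or.inr (Or.inr ⟨hff.1.symm, hff.2.symm⟩))
    · exact Relation.ReflTransGen.single (Or.inl ⟨f, Finset.mem_erase.2 ⟨hne, hf⟩, hff⟩)
  · exact Relation.ReflTransGen.single (Or.inr (Or.inl hr))
  · exact Relation.ReflTransGen.single (Or.inr (Or.inr hr))

lemma term_le_degree {ends : E → V × V} (w : V) (f : E) :
    ((if (ends f).1 = w then 1 else 0) + (if (ends f).2 = w then 1 else 0)) ≤ degreeG ends w :=
  Finset.single_le_sum (f := fun f : E =>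
      ((if (ends f).1 = w then 1 else 0) + (if (ends f).2 = w then 1 else 0)))
    (fun _ _ => Nat.zero_le _) (Finset.mem_univ f)

lemma degree_pos_left {ends : E → V × V} (e : E) : 1 ≤ degreeG ends (ends e).1 := by
  have := term_le_degree (ends := ends) (ends e).1 e
  rw [if_pos rfl] at this
  omega

lemma degree_pos_right {ends : E → V × V} (e : E) : 1 ≤ degreeG ends (ends e).2 := by
  have := term_le_degree (ends := ends) (ends e).2 e
  rw [if_pos rfl] at this
  omega

lemma degree_loop {ends : E → V × V} (e : E) (hl : (ends e).1 = (ends e).2) :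
    2 ≤ degreeG ends (ends e).1 := by
  have := term_le_degree (ends := ends) (ends e).1 e
  rw [if_pos rfl, if_pos hl.symm] at this
  omega

lemma eq_of_degree_one {ends : E → V × V} {w : V} (hdeg : degreeG ends w = 1) {f g : E}
    (hf : (ends f).1 = w ∨ (ends f).2 = w) (hg : (ends g).1 = w ∨ (ends g).2 = w) : f = g := by
  by_contra hne
  set t : E → ℕ := fun f =>
    ((if (ends f).1 = w then 1 else 0) + (if (ends f).2 = w then 1 else 0)) with ht
  have hsum : ∑ x ∈ ({f, g} : Finset E), t x ≤ degreeG ends w :=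
    Finset.sum_le_sum_of_subset (Finset.subset_univ _)
  rw [Finset.sum_pair hne] at hsum
  have h1 : 1 ≤ t f := by rcases hf with h | h <;> simp [ht, h]
  have h2 : 1 ≤ t g := by rcases hg with h | h <;> simp [ht, h]
  omega

lemma edge_mem_of_degree_one {ends : E → V × V} {T : Finset E}
    (hT : Connects ends T (fun _ _ : V => False)) {w z : V} (hwz : w ≠ z) {e : E}
    (hdeg : degreeG ends w = 1) (he : (ends e).1 = w ∨ (ends e).2 = w) : e ∈ T := by
  rcases (hT w z).cases_head with rfl | ⟨c, hstep, _⟩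
  · exact absurd rfl hwz
  rcases hstep with ⟨f, hf, hff⟩ | hF | hF
  · have hfw : (ends f).1 = w ∨ (ends f).2 = w := by
      rcases hff with h | h
      · exact Or.inl (by rw [h])
      · exact Or.inr (by rw [h])
    have : f = e := eq_of_degree_one hdeg hfw he
    exact this ▸ hf
  · exact hF.elim
  · exact hF.elim


lemma contract_diag_eq_zero [Nonempty V] {ends : E → V × V} (x : V) (ℓ : E → ℝ) :
    treePolyContract ends x x ℓ = 0 := by
  classical
  unfold treePolyContract
  refine Finset.sum_eq_zero fun T hT => ?_
  obtain ⟨-, hcard, hconn⟩ := Finset.mem_filter.1 hT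
  have := card_le_conn_diag hconn
  omega

lemma not_mem_contract [Nonempty V] {ends : E → V × V} {e : E} {T : Finset E}
    (hcard : T.card + 2 = Fintype.card V)
    (hconn : Connects ends T (fun a b => a = (ends e).1 ∧ b = (ends e).2)) : e ∉ T := by
  intro heT
  have hconn' := connects_erase' (ends := ends) (e := e) (u := (ends e).1) (v := (ends e).2) rfl heT hconn
  have h1 := card_le_conn_pair hconn'
  have h2 := Finset.card_erase_of_mem heT
  have h3 : 1 ≤ T.card := Finset.card_pos.2 ⟨e, heT⟩
  omega

lemma contract_le [Nonempty V] {ends : E → V × V} {e : E} {ℓ : E → ℝ} (hpos : ∀ f, 0 < ℓ f) :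
    treePolyContract ends (ends e).1 (ends e).2 ℓ ≤ ℓ e * treePoly ends ℓ := by
  classical
  unfold treePolyContract treePoly
  refine key_le hpos e _ _ ?_ ?_
  · intro T hT
    obtain ⟨-, hcard, hconn⟩ := Finset.mem_filter.1 hT
    exact not_mem_contract hcard hconn
  · intro T hT
    obtain ⟨-, hcard, hconn⟩ := Finset.mem_filter.1 hT
    have heT : e ∉ T := not_mem_contract hcard hconn
    refine Finset.mem_filter.2 ⟨Finset.mem_univ _, ?_, connects_insert (ends := ends) (e := e) (u := (ends e).1) (v := (ends e).2) rfl hconn⟩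
    rw [Finset.card_insert_of_notMem heT]
    omega

lemma contract_ge [Nonempty V] {ends : E → V × V} {e : E} {ℓ : E → ℝ} (hpos : ∀ f, 0 < ℓ f)
    (hmem : ∀ T : Finset E, T.card + 1 = Fintype.card V →
      Connects ends T (fun _ _ : V => False) → e ∈ T) :
    ℓ e * treePoly ends ℓ ≤ treePolyContract ends (ends e).1 (ends e).2 ℓ := by
  classical
  unfold treePolyContract treePoly
  refine key_ge hpos e _ _ ?_ ?_
  · intro T hT
    obtain ⟨-, hcard, hconn⟩ := Finset.mem_filter.1 hT
    exact hmem T hcard hconn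
  · intro T hT
    obtain ⟨-, hcard, hconn⟩ := Finset.mem_filter.1 hT
    have heT : e ∈ T := hmem T hcard hconn
    refine Finset.mem_filter.2 ⟨Finset.mem_univ _, ?_, connects_erase (ends := ends) (e := e) (u := (ends e).1) (v := (ends e).2) rfl heT hconn⟩
    have h2 := Finset.card_erase_of_mem heT
    have h3 : 1 ≤ T.card := Finset.card_pos.2 ⟨e, heT⟩
    omega


end AuxCurvature

/-- Proposition `prop:curvature-bounds`: `|K_e| ≤ 1` for every edge. -/
theorem curvature_abs_le_one
    {V E : Type} [Fintype V] [Fintype E] [DecidableEq V] [DecidableEq E]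
    (ends : E → V × V) (hG : ConnectedG ends)
    (ℓ : E → ℝ) (hpos : ∀ e, 0 < ℓ e) (e : E) :
    |curv ends ℓ e| ≤ 1 := by
  classical
  have hNV : Nonempty V := ⟨(ends e).1⟩
  have hNE : Nonempty E := ⟨e⟩
  have hd1 : 1 ≤ degreeG ends (ends e).1 := degree_pos_left e
  have hd2 : 1 ≤ degreeG ends (ends e).2 := degree_pos_right e
  have hd1r : (1 : ℝ) ≤ (degreeG ends (ends e).1 : ℝ) := by exact_mod_cast hd1
  have hd2r : (1 : ℝ) ≤ (degreeG ends (ends e).2 : ℝ) := by exact_mod_cast hd2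
  have hi1 : ((degreeG ends (ends e).1 : ℝ))⁻¹ ≤ 1 := inv_le_one_of_one_le₀ hd1r
  have hi2 : ((degreeG ends (ends e).2 : ℝ))⁻¹ ≤ 1 := inv_le_one_of_one_le₀ hd2r
  have hi1' : (0 : ℝ) ≤ ((degreeG ends (ends e).1 : ℝ))⁻¹ := by positivity
  have hi2' : (0 : ℝ) ≤ ((degreeG ends (ends e).2 : ℝ))⁻¹ := by positivity
  have hτ : 0 < treePoly ends ℓ := treePoly_pos hG hpos
  have hτc : 0 ≤ treePolyContract ends (ends e).1 (ends e).2 ℓ :=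
    treePolyContract_nonneg _ _ hpos
  have hω0 : 0 ≤ effRes ends (ends e).1 (ends e).2 ℓ := div_nonneg hτc hτ.le
  have hρ0 : 0 ≤ effRes ends (ends e).1 (ends e).2 ℓ / ℓ e := div_nonneg hω0 (hpos e).le
  rcases eq_or_ne (ends e).1 (ends e).2 with huv | huv
  · -- loop case
    have h2 : 2 ≤ degreeG ends (ends e).1 := degree_loop e huv
    have h2r : (2 : ℝ) ≤ (degreeG ends (ends e).1 : ℝ) := by exact_mod_cast h2
    have hzero : treePolyContract ends (ends e).1 (ends e).2 ℓ = 0 := by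
      rw [← huv]
      exact contract_diag_eq_zero _ _
    have hω : effRes ends (ends e).1 (ends e).2 ℓ = 0 := by
      unfold effRes
      rw [hzero, zero_div]
    have hhalf : ((degreeG ends (ends e).1 : ℝ))⁻¹ ≤ 1 / 2 := by
      rw [inv_le_comm₀ (by linarith) (by norm_num)]
      linarith
    unfold curv
    rw [hω, zero_div, sub_zero, ← huv, abs_of_nonneg (by positivity)]
    linarith
  · -- non-loop case
    have hle := contract_le (e := e) (ends := ends) hpos
    have hω1 : effRes ends (ends e).1 (ends e).2 ℓ ≤ ℓ e := by
      unfold effRes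
      rw [div_le_iff₀ hτ]
      linarith
    have hρ1 : effRes ends (ends e).1 (ends e).2 ℓ / ℓ e ≤ 1 := by
      rw [div_le_one (hpos e)]
      exact hω1
    unfold curv
    rw [abs_le]
    constructor
    · linarith
    · rcases Nat.lt_or_ge (degreeG ends (ends e).1) 2 with h1 | h1
      · -- degree of first endpoint is 1
        have hdeg : degreeG ends (ends e).1 = 1 := by omega
        have hge := contract_ge (e := e) hpos (fun T hc hco =>
          edge_mem_of_degree_one hco huv hdeg (Or.inl rfl))
        have hωge : ℓ e ≤ effRes ends (ends e).1 (ends e).2 ℓ := by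
          unfold effRes
          rw [le_div_iff₀ hτ]
          linarith
        have hρge : 1 ≤ effRes ends (ends e).1 (ends e).2 ℓ / ℓ e := by
          rw [le_div_iff₀ (hpos e)]
          linarith
        linarith
      · rcases Nat.lt_or_ge (degreeG ends (ends e).2) 2 with h2 | h2
        · have hdeg : degreeG ends (ends e).2 = 1 := by omega
          have hge := contract_ge (e := e) hpos (fun T hc hco =>
            edge_mem_of_degree_one hco (Ne.symm huv) hdeg (Or.inr rfl))
          have hωge : ℓ e ≤ effRes ends (ends e).1 (ends e).2 ℓ := by
            unfold effRes
            rw [le_div_iff₀ hτ]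
            linarith
          have hρge : 1 ≤ effRes ends (ends e).1 (ends e).2 ℓ / ℓ e := by
            rw [le_div_iff₀ (hpos e)]
            linarith
          linarith
        · have h1r : (2 : ℝ) ≤ (degreeG ends (ends e).1 : ℝ) := by exact_mod_cast h1
          have h2r : (2 : ℝ) ≤ (degreeG ends (ends e).2 : ℝ) := by exact_mod_cast h2
          have hh1 : ((degreeG ends (ends e).1 : ℝ))⁻¹ ≤ 1 / 2 := by
            rw [inv_le_comm₀ (by linarith) (by norm_num)]
            linarith
          have hh2 : ((degreeG ends (ends e).2 : ℝ))⁻¹ ≤ 1 / 2 := by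
            rw [inv_le_comm₀ (by linarith) (by norm_num)]
            linarith
          linarith
end

section
/- Let (G, ℓ) be a finite connected graph with positive edge resistances, and regard the Ricci–Foster curvature K_e as a function of the edge resistances {ℓ_f : f ∈ E}. Then for every edge e, the partial derivative of K_e with respect to its own resistance is nonnegative: ∂K_e/∂ℓ_e ≥ 0. -/
open Finset

/-!
Fix every resistance except `ℓ_e = u`. Each term `∏_{f ∉ T} ℓ_f` of a spanning-tree polynomial
is either `u` times a nonnegative constant or a nonnegative constant, so `τ(G) = A u + B` and
`τ(G/uv) = A' u + B'` with `A, B, A', B' ≥ 0`. Hence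
`ω_uv / ℓ_e = (A' + B'/u) · (A u + B)⁻¹` is a product of two nonnegative nonincreasing functions
of `u > 0`, so `K_e` is nondecreasing in `u`, and the derivative of a monotone function is
nonnegative.
-/

open Set

lemma exists_sum_prod_compl_update_eq_affine {E : Type} [Fintype E] [DecidableEq E]
    (S : Finset (Finset E)) (ℓ : E → ℝ) (hℓ : ∀ f, 0 ≤ ℓ f) (e : E) :
    ∃ A B : ℝ, 0 ≤ A ∧ 0 ≤ B ∧
      ∀ u : ℝ, ∑ T ∈ S, ∏ f ∈ Tᶜ, Function.update ℓ e u f = A * u + B := by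
  refine ⟨∑ T ∈ S, if e ∈ Tᶜ then ∏ f ∈ Tᶜ.erase e, ℓ f else 0,
    ∑ T ∈ S, if e ∈ Tᶜ then 0 else ∏ f ∈ Tᶜ, ℓ f, ?_, ?_, fun u => ?_⟩
  · exact Finset.sum_nonneg fun T _ => by
      split_ifs
      exacts [Finset.prod_nonneg fun f _ => hℓ f, le_rfl]
  · exact Finset.sum_nonneg fun T _ => by
      split_ifs
      exacts [le_rfl, Finset.prod_nonneg fun f _ => hℓ f]
  · rw [Finset.sum_mul, ← Finset.sum_add_distrib]
    refine Finset.sum_congr rfl fun T _ => ?_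
    by_cases he : e ∈ Tᶜ
    · rw [Finset.prod_update_of_mem he, Finset.sdiff_singleton_eq_erase]
      simp [he, mul_comm]
    · rw [Finset.prod_update_of_notMem he]
      simp [he]

lemma antitoneOn_inv_affine {A B : ℝ} (hA : 0 ≤ A) (hB : 0 ≤ B) :
    AntitoneOn (fun u : ℝ => (A * u + B)⁻¹) (Ioi 0) := by
  intro u (hu : 0 < u) v _ huv
  have hAuv : A * u + B ≤ A * v + B := by gcongr
  rcases (add_nonneg (mul_nonneg hA hu.le) hB).eq_or_lt with h0 | hpos
  · obtain ⟨rfl, rfl⟩ : A = 0 ∧ B = 0 := by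
      constructor <;> nlinarith [mul_nonneg hA hu.le]
    simp
  · exact inv_anti₀ hpos hAuv

lemma antitoneOn_affine_div_self {A B : ℝ} (hB : 0 ≤ B) :
    AntitoneOn (fun u : ℝ => (A * u + B) / u) (Ioi 0) := by
  intro u (hu : 0 < u) v (hv : 0 < v) huv
  simp only [add_div, mul_div_cancel_right₀ _ hu.ne', mul_div_cancel_right₀ _ hv.ne']
  gcongr

lemma antitoneOn_affine_div_affine_mul_self {A B A' B' : ℝ}
    (hA : 0 ≤ A) (hB : 0 ≤ B) (hA' : 0 ≤ A') (hB' : 0 ≤ B') :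
    AntitoneOn (fun u : ℝ => (A' * u + B') / ((A * u + B) * u)) (Ioi 0) := by
  intro u hu v hv huv
  have hnonneg : ∀ w ∈ Ioi (0 : ℝ), 0 ≤ (A' * w + B') / w ∧ 0 ≤ (A * w + B)⁻¹ := fun w hw =>
    have hw : 0 < w := hw
    ⟨by positivity, by positivity⟩
  simp only [div_mul_eq_div_div_swap, div_eq_mul_inv _ (A * _ + B)]
  exact mul_le_mul (antitoneOn_affine_div_self hB' hu hv huv)
    (antitoneOn_inv_affine hA hB hu hv huv) (hnonneg v hv).2 (hnonneg u hu).1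

lemma MonotoneOn.deriv_nonneg_of_mem_Ioi {g : ℝ → ℝ} {a x : ℝ} (hg : MonotoneOn g (Ioi a))
    (hx : a < x) : 0 ≤ deriv g x := by
  rw [← derivWithin_of_isOpen isOpen_Ioi hx]
  exact hg.derivWithin_nonneg

lemma monotoneOn_curv_update {V E : Type} [Fintype V] [Fintype E] [DecidableEq V]
    [DecidableEq E] (ends : E → V × V) (ℓ : E → ℝ) (hℓ : ∀ f, 0 ≤ ℓ f) (e : E) :
    MonotoneOn (fun u : ℝ => curv ends (Function.update ℓ e u) e) (Ioi 0) := by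
  obtain ⟨A', B', hA', hB', hτc⟩ := exists_sum_prod_compl_update_eq_affine _ ℓ hℓ e
  obtain ⟨A, B, hA, hB, hτ⟩ := exists_sum_prod_compl_update_eq_affine _ ℓ hℓ e
  have hcurv : ∀ u : ℝ, curv ends (Function.update ℓ e u) e =
      (degreeG ends (ends e).1 : ℝ)⁻¹ + (degreeG ends (ends e).2 : ℝ)⁻¹
        - (A' * u + B') / ((A * u + B) * u) := fun u => by
    rw [curv, effRes, treePoly, treePolyContract, hτc u, hτ u, Function.update_self, div_div]
  simp only [hcurv]
  exact fun u hu v hv huv =>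
    sub_le_sub_left (antitoneOn_affine_div_affine_mul_self hA hB hA' hB' hu hv huv) _

theorem curvature_partial_own_nonneg_general
    {V E : Type} [Fintype V] [Fintype E] [DecidableEq V] [DecidableEq E]
    (ends : E → V × V)
    (ℓ : E → ℝ) (hpos : ∀ f, 0 < ℓ f) (e : E) :
    0 ≤ deriv (fun u : ℝ => curv ends (Function.update ℓ e u) e) (ℓ e) :=
  (monotoneOn_curv_update ends ℓ (fun f => (hpos f).le) e).deriv_nonneg_of_mem_Ioi (hpos e)

/-- Proposition `prop:curvature-partials`(a): the curvature of an edge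
is nondecreasing in its own resistance: `∂K_e/∂ℓ_e ≥ 0`. -/
theorem curvature_partial_own_nonneg
    {V E : Type} [Fintype V] [Fintype E] [DecidableEq V] [DecidableEq E]
    (ends : E → V × V) (hG : ConnectedG ends)
    (ℓ : E → ℝ) (hpos : ∀ f, 0 < ℓ f) (e : E) :
    0 ≤ deriv (fun u : ℝ => curv ends (Function.update ℓ e u) e) (ℓ e) :=
  curvature_partial_own_nonneg_general ends ℓ hpos e
end
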